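/- Odd rows of the quantum baker matrix: for 0 ≤ n, m < N with n odd, the entry of the quantum baker matrix is 𝖡_{nm} = e^{iπ(n−2m)/N} · (√2/N) · (1 + i·cot(π(n−2m)/N)). -/

import Mathlib

noncomputable section

noncomputable section

/-- Entry of the `M × M` discrete Fourier transform matrix: `M^{-1/2} e^{-2πiab/M}`. -/
def dftEntry (M a b : ℕ) : ℂ :=
  ((Real.sqrt M : ℝ) : ℂ)⁻¹ * Complex.exp (-(2 * Real.pi * Complex.I * a * b) / M)

/-- The `N × N` discrete Fourier transform matrix `(𝓕^N)_{mn} = N^{-1/2} e^{-2πimn/N}`. -/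
def dftMatrix (N : ℕ) : Matrix (Fin N) (Fin N) ℂ :=
  Matrix.of fun m n : Fin N => dftEntry N m n

/-- The diagonal phase matrix `Z` with `Z_{nn} = e^{iπn/N}`. -/
def Zmat (N : ℕ) : Matrix (Fin N) (Fin N) ℂ :=
  Matrix.diagonal fun n : Fin N => Complex.exp (Real.pi * Complex.I * (n : ℕ) / N)

/-- The block-diagonal matrix `D` with upper-left block `𝓕^{N/2}` and lower-right block
`−𝓕^{N/2}`. -/
def Dmat (N : ℕ) : Matrix (Fin N) (Fin N) ℂ :=
  Matrix.of fun m n : Fin N =>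
    if (m : ℕ) < N / 2 ∧ (n : ℕ) < N / 2 then dftEntry (N / 2) m n
    else if N / 2 ≤ (m : ℕ) ∧ N / 2 ≤ (n : ℕ) then
      -dftEntry (N / 2) ((m : ℕ) - N / 2) ((n : ℕ) - N / 2)
    else 0

/-- The quantum baker matrix `𝖡 = Z (𝓕^N)⁻¹ D Z⁻²`. -/
def bakerMatrix (N : ℕ) : Matrix (Fin N) (Fin N) ℂ :=
  Zmat N * (dftMatrix N)⁻¹ * Dmat N * (Zmat N ^ 2)⁻¹

/-! The inverse of `𝓕^N` is the conjugate DFT, so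
`𝖡_{nm} = e^{iπn/N} ((𝓕^N)⁻¹ D)_{nm} e^{-2πim/N}`. For odd `n` the row `k ↦ e^{2πink/N}` of
`(𝓕^N)⁻¹` changes sign under `k ↦ k + N/2`, which cancels the sign of the lower block of `D`; so
in either block column the entry is `(√2/N) ∑_{j<N/2} q^j` with `q = e^{2πi(n-2m)/N}`. As `n - 2m`
is odd, `q^{N/2} = -1` and `q ≠ 1`, and the geometric sum is `2/(1-q) = 1 + i cot(π(n-2m)/N)`. -/

open Complex Finset Matrix
open scoped Real

theorem exp_two_pi_I_mul_int_div_eq_one_iff {N : ℕ} (hN : N ≠ 0) (c : ℤ) :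
    exp (2 * π * I * (c / N)) = 1 ↔ (N : ℤ) ∣ c := by
  rw [← (isPrimitiveRoot_exp N hN).zpow_eq_one_iff_dvd, ← exp_int_mul]
  ring_nf

theorem sum_range_exp_two_pi_I_mul_int_div {N : ℕ} (hN : N ≠ 0) (c : ℤ) :
    ∑ k ∈ range N, exp (2 * π * I * (c / N)) ^ k = if (N : ℤ) ∣ c then (N : ℂ) else 0 := by
  split_ifs with hc
  · simp [(exp_two_pi_I_mul_int_div_eq_one_iff hN c).mpr hc]
  have hpow : exp (2 * π * I * (c / N)) ^ N = 1 := by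
    rw [← exp_nat_mul, ← exp_int_mul_two_pi_mul_I c]
    congr 1
    field_simp
  rw [geom_sum_eq ((exp_two_pi_I_mul_int_div_eq_one_iff hN c).not.mpr hc), hpow, sub_self,
    zero_div]

theorem ofReal_sqrt_natCast_inv_mul_self (N : ℕ) :
    ((√N : ℝ) : ℂ)⁻¹ * ((√N : ℝ) : ℂ)⁻¹ = (N : ℂ)⁻¹ := by
  rw [← mul_inv, ← ofReal_mul, Real.mul_self_sqrt N.cast_nonneg, ofReal_natCast]

theorem ofReal_sqrt_inv_mul_sqrt_inv_add_self (M : ℕ) :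
    ((√(M + M : ℕ) : ℝ) : ℂ)⁻¹ * ((√M : ℝ) : ℂ)⁻¹ = ((√2 / (M + M : ℕ) : ℝ) : ℂ) := by
  rw [← ofReal_inv, ← ofReal_inv, ← ofReal_mul, ofReal_inj]
  rcases M.eq_zero_or_pos with rfl | hM
  · simp
  have : (0 : ℝ) < √(M : ℝ) := Real.sqrt_pos.mpr (by exact_mod_cast hM)
  push_cast
  rw [← two_mul, Real.sqrt_mul zero_le_two]
  field_simp
  rw [Real.sq_sqrt zero_le_two, Real.sq_sqrt M.cast_nonneg]

def idftMatrix (N : ℕ) : Matrix (Fin N) (Fin N) ℂ :=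
  Matrix.of fun a b : Fin N => ((√N : ℝ) : ℂ)⁻¹ * exp (2 * π * I * a * b / N)

theorem dftMatrix_mul_idftMatrix (N : ℕ) : dftMatrix N * idftMatrix N = 1 := by
  ext a b
  have hN : N ≠ 0 := a.pos.ne'
  have hterm : ∀ k : Fin N, dftMatrix N a k * idftMatrix N k b =
      (N : ℂ)⁻¹ * exp (2 * π * I * ((((b : ℕ) : ℤ) - (a : ℕ) : ℤ) / N)) ^ (k : ℕ) := by
    intro k
    simp only [dftMatrix, idftMatrix, dftEntry, of_apply]
    rw [mul_mul_mul_comm, ofReal_sqrt_natCast_inv_mul_self, ← exp_add, ← exp_nat_mul]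
    congr 2
    push_cast
    field_simp
    ring
  have hdvd : (N : ℤ) ∣ ((b : ℕ) : ℤ) - (a : ℕ) ↔ a = b := by
    refine ⟨fun h => ?_, fun h => by simp [h]⟩
    have := Int.eq_zero_of_abs_lt_dvd h (by rw [abs_sub_lt_iff]; omega)
    exact Fin.ext (by omega)
  rw [mul_apply, sum_congr rfl fun k _ => hterm k, ← mul_sum,
    Fin.sum_univ_eq_sum_range (fun k => exp _ ^ k), sum_range_exp_two_pi_I_mul_int_div hN,
    one_apply]
  simp only [hdvd]
  split_ifs <;> simp [hN]

theorem Zmat_sq_inv (N : ℕ) :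
    (Zmat N ^ 2)⁻¹ = diagonal fun n : Fin N => exp (-(2 * π * I * (n : ℕ) / N)) := by
  refine inv_eq_right_inv ?_
  rw [Zmat, diagonal_pow, diagonal_mul_diagonal, ← diagonal_one]
  congr 1
  ext n
  rw [Pi.pow_apply, ← exp_nat_mul, ← exp_add, ← exp_zero]
  congr 1
  push_cast
  ring

theorem bakerMatrix_apply (N : ℕ) (n m : Fin N) :
    bakerMatrix N n m =
      exp (π * I * (n : ℕ) / N) * (idftMatrix N * Dmat N) n m *
        exp (-(2 * π * I * (m : ℕ) / N)) := by
  rw [bakerMatrix, inv_eq_right_inv (dftMatrix_mul_idftMatrix N), Zmat_sq_inv, mul_diagonal,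
    Zmat, mul_assoc, diagonal_mul]

theorem sum_mul_Dmat_apply {M : ℕ} (f : Fin (M + M) → ℂ) (m : Fin (M + M)) :
    ∑ k, f k * Dmat (M + M) k m =
      if (m : ℕ) < M then ∑ j : Fin M, f (Fin.castAdd M j) * dftEntry M j m
      else -∑ j : Fin M, f (Fin.natAdd M j) * dftEntry M j (m - M) := by
  have hM : (M + M) / 2 = M := by omega
  rw [Fin.sum_univ_add]
  split_ifs with hm
  · simp [Dmat, hM, hm]
  · simp [Dmat, hM, hm, le_of_not_gt hm, fun j : Fin M => not_le.mpr j.isLt]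

theorem dftEntry_sub_self_right {M b : ℕ} (a : ℕ) (hb : M ≤ b) :
    dftEntry M a (b - M) = dftEntry M a b := by
  rcases M.eq_zero_or_pos with rfl | hM
  · rfl
  have hM' : (M : ℂ) ≠ 0 := Nat.cast_ne_zero.mpr hM.ne'
  rw [dftEntry, dftEntry, show -(2 * π * I * a * ((b - M : ℕ) : ℂ)) / M =
      -(2 * π * I * a * b) / M + a * (2 * π * I) by push_cast [Nat.cast_sub hb]; field_simp; ring,
    exp_add, exp_nat_mul_two_pi_mul_I, mul_one]

theorem idftMatrix_apply_natAdd_of_odd {M : ℕ} {n : Fin (M + M)} (hn : Odd (n : ℕ)) (j : Fin M) :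
    idftMatrix (M + M) n (Fin.natAdd M j) = -idftMatrix (M + M) n (Fin.castAdd M j) := by
  have hM : (M : ℂ) ≠ 0 := Nat.cast_ne_zero.mpr j.pos.ne'
  simp only [idftMatrix, of_apply, Fin.val_natAdd, Fin.val_castAdd]
  rw [← mul_neg, show 2 * π * I * (n : ℕ) * ((M + j : ℕ) : ℂ) / ((M + M : ℕ) : ℂ) =
      2 * π * I * (n : ℕ) * (j : ℕ) / ((M + M : ℕ) : ℂ) + (n : ℕ) * (π * I) by
        push_cast; field_simp; ring,
    exp_add, exp_nat_mul, exp_pi_mul_I, hn.neg_one_pow, mul_neg_one]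

theorem idftMatrix_mul_Dmat_apply_of_odd {M : ℕ} {n : Fin (M + M)} (hn : Odd (n : ℕ))
    (m : Fin (M + M)) :
    (idftMatrix (M + M) * Dmat (M + M)) n m =
      ((√(M + M : ℕ) : ℝ) : ℂ)⁻¹ * ((√M : ℝ) : ℂ)⁻¹ *
        ∑ j ∈ range M, exp (2 * π * I * ((((n : ℕ) - 2 * (m : ℕ) : ℤ) : ℂ) / (M + M : ℕ))) ^ j := by
  have hupper : (idftMatrix (M + M) * Dmat (M + M)) n m =
      ∑ j : Fin M, idftMatrix (M + M) n (Fin.castAdd M j) * dftEntry M j m := by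
    rw [mul_apply, sum_mul_Dmat_apply]
    split_ifs with hm
    · rfl
    · simp only [idftMatrix_apply_natAdd_of_odd hn, dftEntry_sub_self_right _ (not_lt.mp hm),
        neg_mul, sum_neg_distrib, neg_neg]
  rw [hupper, ← Fin.sum_univ_eq_sum_range (fun j => exp _ ^ j), mul_sum]
  refine sum_congr rfl fun j _ => ?_
  have hM : (M : ℂ) ≠ 0 := Nat.cast_ne_zero.mpr j.pos.ne'
  simp only [idftMatrix, dftEntry, of_apply, Fin.val_castAdd]
  rw [mul_mul_mul_comm, ← exp_add, ← exp_nat_mul]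
  congr 2
  push_cast
  field_simp
  ring

theorem geom_sum_eq_two_div_one_sub {K : Type*} [Field K] {q : K} (hq : q ≠ 1) {M : ℕ}
    (hqM : q ^ M = -1) : ∑ j ∈ range M, q ^ j = 2 / (1 - q) := by
  rw [geom_sum_eq hq, hqM, ← neg_div_neg_eq]
  ring

theorem one_add_I_mul_cot_pi_mul {z : ℂ} (hz : exp (2 * π * I * z) ≠ 1) :
    1 + I * cot (π * z) = 2 / (1 - exp (2 * π * I * z)) := by
  have : 1 - exp (2 * π * I * z) ≠ 0 := sub_ne_zero.mpr hz.symm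
  rw [cot_pi_eq_exp_ratio, mul_div_assoc', mul_div_mul_left _ _ I_ne_zero, one_add_div this]
  ring

/-- Odd rows of the quantum baker matrix: for `n` odd,
`𝖡_{nm} = e^{iπ(n−2m)/N} · (√2/N) · (1 + i·cot(π(n−2m)/N))`. -/
theorem bakerMatrix_odd_row (N : ℕ) (hN : 0 < N) (hNeven : Even N)
    (n m : Fin N) (hn : Odd (n : ℕ)) :
    bakerMatrix N n m =
      Complex.exp (Real.pi * Complex.I * (((n : ℕ) : ℂ) - 2 * ((m : ℕ) : ℂ)) / N) *
        ((Real.sqrt 2 / N : ℝ) : ℂ) *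
        (1 + Complex.I *
          ((Real.cot (Real.pi * (((n : ℕ) : ℝ) - 2 * ((m : ℕ) : ℝ)) / N) : ℝ) : ℂ)) := by
  obtain ⟨M, rfl⟩ := hNeven
  set c : ℤ := (n : ℕ) - 2 * (m : ℕ) with hc_def
  have hc : Odd c := (Int.odd_coe_nat _ |>.mpr hn).sub_even (even_two_mul _)
  have hq : exp (2 * π * I * (c / (M + M : ℕ))) ≠ 1 := by
    rw [Ne, exp_two_pi_I_mul_int_div_eq_one_iff hN.ne']
    exact fun hdvd => Int.not_even_iff_odd.mpr hc
      (even_iff_two_dvd.mpr (dvd_trans ⟨M, by push_cast; ring⟩ hdvd))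
  have hqM : exp (2 * π * I * (c / (M + M : ℕ))) ^ M = -1 := by
    have hM : (M : ℂ) ≠ 0 := by norm_cast; omega
    rw [← exp_nat_mul, show (M : ℂ) * (2 * π * I * (c / (M + M : ℕ))) = c * (π * I) by
      push_cast; field_simp; ring, exp_int_mul, exp_pi_mul_I, hc.neg_one_zpow]
  have hphase : exp (π * I * (n : ℕ) / (M + M : ℕ)) * exp (-(2 * π * I * (m : ℕ) / (M + M : ℕ))) =
      exp (π * I * ((n : ℕ) - 2 * (m : ℕ)) / (M + M : ℕ)) := by
    rw [← exp_add]
    ring_nf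
  have hcot : ((Real.cot (π * ((n : ℕ) - 2 * (m : ℕ)) / (M + M : ℕ)) : ℝ) : ℂ) =
      cot (π * (c / (M + M : ℕ))) := by
    rw [ofReal_cot, hc_def]
    push_cast
    ring_nf
  rw [bakerMatrix_apply, idftMatrix_mul_Dmat_apply_of_odd hn, geom_sum_eq_two_div_one_sub hq hqM,
    ← one_add_I_mul_cot_pi_mul hq, ofReal_sqrt_inv_mul_sqrt_inv_add_self, hcot, ← hphase]
  ring

end

end
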